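/- arXiv:2210.11120 — 2 statements merged into one kernel-verified Lean document; each statement's English description precedes it below -/
import Mathlib

section
/- For every n ≥ 1, the strong domination number of the path graph P_n on n vertices equals ⌈n/3⌉, i.e., γst(P_n) = ⌈n/3⌉. -/
open SimpleGraph

/-- The degree of a vertex, as the cardinality of its neighbor set. -/
noncomputable def sdeg {V : Type*} (G : SimpleGraph V) (v : V) : ℕ :=
  (G.neighborSet v).ncard

/-- `D` is a strong dominating set of `G` if every vertex outside `D` has a neighbor
in `D` of at least the same degree. -/
def IsStrongDominatingSet {V : Type*} (G : SimpleGraph V) (D : Set V) : Prop :=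
  ∀ x ∉ D, ∃ y ∈ D, G.Adj x y ∧ sdeg G x ≤ sdeg G y

/-- The strong domination number: minimum cardinality of a strong dominating set. -/
noncomputable def strongDominationNumber {V : Type*} (G : SimpleGraph V) : ℕ :=
  sInf {n | ∃ D : Set V, IsStrongDominatingSet G D ∧ D.ncard = n}

/-- Subdivision of the edge `uv` of `G`: delete `uv`, add a new vertex `none`
adjacent to `u` and `v`. -/
def subdivide {V : Type*} (G : SimpleGraph V) (u v : V) : SimpleGraph (Option V) :=
  SimpleGraph.fromRel (fun a b =>
    match a, b with
    | some x, some y => G.Adj x y ∧ ¬(s(x, y) = s(u, v))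
    | some x, none => x = u ∨ x = v
    | none, some _ => False
    | none, none => False)

/-- Contraction of the edge `uv` of `G`: the vertex `u` plays the role of the merged
vertex, and `v` is removed. -/
def contractEdge {V : Type*} (G : SimpleGraph V) (u v : V) :
    SimpleGraph {x : V // x ≠ v} :=
  SimpleGraph.fromRel (fun a b =>
    G.Adj a.1 b.1 ∨ (a.1 = u ∧ G.Adj v b.1) ∨ (b.1 = u ∧ G.Adj a.1 v))

/-- The corona product `G1 ∘ G2`: one copy of `G1` together with one copy of `G2`
for each vertex `i` of `G1`, where `i` is joined to all vertices of its copy. -/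
def corona {V1 V2 : Type*} (G1 : SimpleGraph V1) (G2 : SimpleGraph V2) :
    SimpleGraph (V1 ⊕ V1 × V2) :=
  SimpleGraph.fromRel (fun a b =>
    match a, b with
    | .inl a, .inl b => G1.Adj a b
    | .inl a, .inr (i, _) => a = i
    | .inr _, .inl _ => False
    | .inr (i, x), .inr (j, y) => i = j ∧ G2.Adj x y)

/-- The `k`-subdivision `G^{1/k}` of `G`: every edge is replaced by a path of length
`k`, the internal vertices of the path replacing `e` being indexed by `e` and a
position in `Fin (k-1)` (an orientation of `e` is chosen via `Quot.out`). -/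
noncomputable def kSubdivision {V : Type*} (G : SimpleGraph V) (k : ℕ) :
    SimpleGraph (V ⊕ G.edgeSet × Fin (k - 1)) :=
  SimpleGraph.fromRel (fun a b =>
    match a, b with
    | .inl x, .inl y => k ≤ 1 ∧ G.Adj x y
    | .inl x, .inr (e, i) =>
        (x = (Quot.out (e : Sym2 V)).1 ∧ (i : ℕ) = 0) ∨
        (x = (Quot.out (e : Sym2 V)).2 ∧ (i : ℕ) = k - 2)
    | .inr _, .inl _ => False
    | .inr (e, i), .inr (f, j) => e = f ∧ (j : ℕ) = (i : ℕ) + 1)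

/-!
Every vertex of `P_n` has degree at most two, so it dominates at most three vertices and any
dominating set has at least `⌈n/3⌉` elements. Conversely the vertices `1, 4, 7, …`, with the last
one moved back to `n - 2`, form a strong dominating set of that size: the degree condition only
asks that an internal vertex be dominated by an internal vertex, and the chosen vertices are
internal unless they dominate a leaf.
-/

def IsDominatingSet {V : Type*} (G : SimpleGraph V) (D : Set V) : Prop :=
  ∀ x ∉ D, ∃ y ∈ D, G.Adj x y

theorem IsStrongDominatingSet.isDominatingSet {V : Type*} {G : SimpleGraph V} {D : Set V}
    (hD : IsStrongDominatingSet G D) : IsDominatingSet G D := fun x hx =>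
  let ⟨y, hy, hxy, _⟩ := hD x hx
  ⟨y, hy, hxy⟩

theorem IsDominatingSet.card_le_ncard_mul {V : Type*} [Finite V] {G : SimpleGraph V} {D : Set V}
    {k : ℕ} (hD : IsDominatingSet G D) (hk : ∀ v ∈ D, sdeg G v ≤ k) :
    Nat.card V ≤ D.ncard * (k + 1) := by
  have hcover : Set.univ ⊆ ⋃ d ∈ D.toFinite.toFinset, insert d (G.neighborSet d) := by
    intro x _
    simp only [Set.mem_iUnion, Set.Finite.mem_toFinset, Set.mem_insert_iff, mem_neighborSet,
      exists_prop]
    by_cases hx : x ∈ D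
    · exact ⟨x, hx, Or.inl rfl⟩
    · obtain ⟨y, hy, hxy⟩ := hD x hx
      exact ⟨y, hy, Or.inr hxy.symm⟩
  calc Nat.card V = (Set.univ : Set V).ncard := (Set.ncard_univ V).symm
    _ ≤ (⋃ d ∈ D.toFinite.toFinset, insert d (G.neighborSet d)).ncard :=
      Set.ncard_le_ncard hcover
    _ ≤ ∑ d ∈ D.toFinite.toFinset, (insert d (G.neighborSet d)).ncard :=
      Finset.set_ncard_biUnion_le _ _
    _ ≤ ∑ _d ∈ D.toFinite.toFinset, (k + 1) := Finset.sum_le_sum fun d hd =>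
      (Set.ncard_insert_le _ _).trans (Nat.succ_le_succ (hk d (by simpa using hd)))
    _ = D.ncard * (k + 1) := by
      rw [Finset.sum_const, smul_eq_mul, ← Set.ncard_eq_toFinset_card]

theorem strongDominationNumber_le_ncard {V : Type*} {G : SimpleGraph V} {D : Set V}
    (hD : IsStrongDominatingSet G D) : strongDominationNumber G ≤ D.ncard :=
  Nat.sInf_le ⟨D, hD, rfl⟩

theorem le_strongDominationNumber {V : Type*} {G : SimpleGraph V} {k : ℕ}
    (h : ∀ D, IsStrongDominatingSet G D → k ≤ D.ncard) : k ≤ strongDominationNumber G :=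
  le_csInf ⟨_, Set.univ, fun _ hx => absurd (Set.mem_univ _) hx, rfl⟩
    fun _ ⟨D, hD, hm⟩ => hm ▸ h D hD

theorem ncard_setOf_fin_val_eq (n m : ℕ) :
    {w : Fin n | w.val = m}.ncard = if m < n then 1 else 0 := by
  split_ifs with hm
  · exact Set.ncard_eq_one.2 ⟨⟨m, hm⟩, Set.ext fun w => by simp [Fin.ext_iff]⟩
  · exact (Set.ncard_eq_zero).2 (Set.eq_empty_of_forall_notMem fun w hw => hm (hw ▸ w.isLt))

theorem sdeg_pathGraph {n : ℕ} (v : Fin n) :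
    sdeg (pathGraph n) v = (if 0 < v.val then 1 else 0) + (if v.val + 1 < n then 1 else 0) := by
  have hsplit : (pathGraph n).neighborSet v =
      {w | w.val = v.val - 1 ∧ 0 < v.val} ∪ {w | w.val = v.val + 1} := by
    ext w
    simp only [mem_neighborSet, pathGraph_adj, Set.mem_union, Set.mem_ofPred_eq]
    omega
  have hdisj : Disjoint {w : Fin n | w.val = v.val - 1 ∧ 0 < v.val} {w | w.val = v.val + 1} :=
    Set.disjoint_left.2 fun w h₁ h₂ => by simp only [Set.mem_ofPred_eq] at h₁ h₂; omega
  rw [sdeg, hsplit, Set.ncard_union_eq hdisj, ncard_setOf_fin_val_eq]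
  congr 1
  by_cases hv : 0 < v.val
  · simp only [hv, and_true, ncard_setOf_fin_val_eq, if_true]
    exact if_pos (by omega)
  · simp [hv]

theorem sdeg_pathGraph_le_two {n : ℕ} (v : Fin n) : sdeg (pathGraph n) v ≤ 2 := by
  rw [sdeg_pathGraph]
  split_ifs <;> omega

def pathGraphDominator (n : ℕ) (i : Fin ((n + 2) / 3)) : Fin n :=
  ⟨min (3 * i.val + 1) (n - 2), by have := i.isLt; omega⟩

theorem isStrongDominatingSet_range_pathGraphDominator (n : ℕ) :
    IsStrongDominatingSet (pathGraph n) (Set.range (pathGraphDominator n)) := by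
  intro x hx
  have hxn := x.isLt
  -- `x` is dominated by the vertex chosen for its block `{3q, 3q + 1, 3q + 2}`, `q = x / 3`;
  -- that vertex is not a leaf unless `x` is one.
  set y := pathGraphDominator n ⟨x.val / 3, by omega⟩
  have hy : y.val = min (3 * (x.val / 3) + 1) (n - 2) := rfl
  have hxy : x.val ≠ y.val := fun h => hx ⟨_, (Fin.ext h).symm⟩
  refine ⟨y, Set.mem_range_self _, ?_, ?_⟩
  · rw [pathGraph_adj]
    omega
  · rw [sdeg_pathGraph, sdeg_pathGraph]
    split_ifs <;> omega

theorem strongDominationNumber_pathGraph_general (n : ℕ) :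
    strongDominationNumber (SimpleGraph.pathGraph n) = (n + 2) / 3 := by
  refine le_antisymm ?_ (le_strongDominationNumber fun D hD => ?_)
  · calc strongDominationNumber (pathGraph n)
        ≤ (Set.range (pathGraphDominator n)).ncard :=
          strongDominationNumber_le_ncard (isStrongDominatingSet_range_pathGraphDominator n)
      _ ≤ (n + 2) / 3 := by
          simpa [← Set.image_univ] using
            Set.ncard_image_le (f := pathGraphDominator n) (s := Set.univ)
  · have hcard := hD.isDominatingSet.card_le_ncard_mul fun v _ => sdeg_pathGraph_le_two v
    rw [Nat.card_fin] at hcard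
    omega

/-- `γst(P_n) = ⌈n/3⌉` for all `n ≥ 1`. -/
theorem strongDominationNumber_pathGraph (n : ℕ) (hn : 1 ≤ n) :
    strongDominationNumber (SimpleGraph.pathGraph n) = (n + 2) / 3 :=
  strongDominationNumber_pathGraph_general n
end

section
/- Let n ≥ 3 with n ≢ 1 (mod 3), and let e = uv be an edge of the path graph P_n incident with a leaf (so deg(u) = 1 and deg(v) = 2). Then γst(P_n − e) = γst(P_n) + deg(u) + deg(v) − 2 = ⌈n/3⌉ + 1; that is, the upper bound of the edge-deletion theorem is attained with equality. -/
open SimpleGraph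

/-!
Deleting the leaf edge `uv` of `P_n` isolates `u`. An isolated vertex lies in every strong
dominating set and dominates nothing else, so `γst(P_n - uv) = γst(P_{n-1}) + 1`. For paths,
`γst(P_m) = ⌈m/3⌉`: every vertex dominates at most three vertices, and the vertices
`1, 4, 7, …` (the last one moved back to `m - 2`) have degree 2, hence form a strong
dominating set. Finally `⌈(n-1)/3⌉ = ⌈n/3⌉` when `n ≢ 1 (mod 3)`.
-/

variable {V : Type*} {G : SimpleGraph V} {D : Set V}

theorem isStrongDominatingSet_univ (G : SimpleGraph V) : IsStrongDominatingSet G Set.univ :=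
  fun _ hx => absurd (Set.mem_univ _) hx

theorem strongDominationNumber_le (hD : IsStrongDominatingSet G D) :
    strongDominationNumber G ≤ D.ncard :=
  Nat.sInf_le ⟨D, hD, rfl⟩

theorem exists_isStrongDominatingSet_ncard_eq (G : SimpleGraph V) :
    ∃ D, IsStrongDominatingSet G D ∧ D.ncard = strongDominationNumber G :=
  Nat.sInf_mem (s := {n | ∃ D : Set V, IsStrongDominatingSet G D ∧ D.ncard = n})
    ⟨_, Set.univ, isStrongDominatingSet_univ G, rfl⟩

theorem IsStrongDominatingSet.mem_of_isIsolated (hD : IsStrongDominatingSet G D) {a : V}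
    (ha : G.IsIsolated a) : a ∈ D := by
  by_contra haD
  obtain ⟨y, -, hay, -⟩ := hD a haD
  exact ha y hay

theorem natCard_le_mul_strongDominationNumber [Finite V] {Δ : ℕ}
    (hΔ : ∀ v, sdeg G v ≤ Δ) : Nat.card V ≤ (Δ + 1) * strongDominationNumber G := by
  obtain ⟨D, hD, hcard⟩ := exists_isStrongDominatingSet_ncard_eq G
  have hcover : (⋃ y ∈ D.toFinite.toFinset, insert y (G.neighborSet y)) = Set.univ := by
    refine Set.eq_univ_of_forall fun x => ?_
    simp only [Set.mem_iUnion, Set.Finite.mem_toFinset, Set.mem_insert_iff, exists_prop]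
    by_cases hx : x ∈ D
    · exact ⟨x, hx, Or.inl rfl⟩
    · obtain ⟨y, hy, hxy, -⟩ := hD x hx
      exact ⟨y, hy, Or.inr hxy.symm⟩
  calc Nat.card V = (⋃ y ∈ D.toFinite.toFinset, insert y (G.neighborSet y)).ncard := by
        rw [hcover, Set.ncard_univ]
    _ ≤ ∑ y ∈ D.toFinite.toFinset, (insert y (G.neighborSet y)).ncard :=
        Finset.set_ncard_biUnion_le _ _
    _ ≤ ∑ _y ∈ D.toFinite.toFinset, (Δ + 1) :=
        Finset.sum_le_sum fun y _ =>
          (Set.ncard_insert_le y _).trans (Nat.add_le_add_right (hΔ y) 1)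
    _ = (Δ + 1) * strongDominationNumber G := by
        rw [Finset.sum_const, smul_eq_mul, ← Set.ncard_eq_toFinset_card D, hcard, mul_comm]

namespace SimpleGraph.Iso

variable {W : Type*} {G' : SimpleGraph W}

theorem sdeg_apply (e : G ≃g G') (v : V) : sdeg G' (e v) = sdeg G v := by
  simp only [sdeg, ← Nat.card_coe_set_eq, Nat.card_congr (e.mapNeighborSet v)]

theorem isStrongDominatingSet_image (e : G ≃g G') (hD : IsStrongDominatingSet G D) :
    IsStrongDominatingSet G' (e '' D) := by
  intro x hx
  obtain ⟨x, rfl⟩ := e.surjective x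
  obtain ⟨y, hy, hxy, hdeg⟩ := hD x fun h => hx ⟨x, h, rfl⟩
  exact ⟨e y, ⟨y, hy, rfl⟩, e.map_adj_iff.mpr hxy, by rwa [e.sdeg_apply, e.sdeg_apply]⟩

theorem strongDominationNumber_le (e : G ≃g G') :
    strongDominationNumber G' ≤ strongDominationNumber G := by
  obtain ⟨D, hD, hcard⟩ := exists_isStrongDominatingSet_ncard_eq G
  calc strongDominationNumber G' ≤ (e '' D).ncard :=
        _root_.strongDominationNumber_le (e.isStrongDominatingSet_image hD)
    _ = strongDominationNumber G := by rw [Set.ncard_image_of_injective D e.injective, hcard]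

theorem strongDominationNumber_eq (e : G ≃g G') :
    strongDominationNumber G = strongDominationNumber G' :=
  le_antisymm e.symm.strongDominationNumber_le e.strongDominationNumber_le

end SimpleGraph.Iso

section IsolatedVertex

variable {a : V}

theorem sdeg_induce_compl_singleton (ha : G.IsIsolated a) (x : ({a}ᶜ : Set V)) :
    sdeg (G.induce {a}ᶜ) x = sdeg G x := by
  rw [sdeg, sdeg, neighborSet_induce]
  refine Set.ncard_preimage_of_injective_subset_range Subtype.val_injective fun w hw => ?_
  exact ⟨⟨w, fun hwa => ha x (hwa ▸ hw).symm⟩, rfl⟩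

theorem isStrongDominatingSet_iff_of_isIsolated (ha : G.IsIsolated a) :
    IsStrongDominatingSet G D ↔
      a ∈ D ∧ IsStrongDominatingSet (G.induce {a}ᶜ) (Subtype.val ⁻¹' D) := by
  refine ⟨fun hD => ⟨hD.mem_of_isIsolated ha, fun x hx => ?_⟩, fun ⟨haD, hD⟩ x hx => ?_⟩
  · obtain ⟨y, hy, hxy, hdeg⟩ := hD x hx
    have hya : y ≠ a := by rintro rfl; exact ha x hxy.symm
    refine ⟨⟨y, hya⟩, hy, hxy, ?_⟩
    rwa [sdeg_induce_compl_singleton ha, sdeg_induce_compl_singleton ha]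
  · have hxa : x ≠ a := by rintro rfl; exact hx haD
    obtain ⟨y, hy, hxy, hdeg⟩ := hD ⟨x, hxa⟩ hx
    refine ⟨y, hy, hxy, ?_⟩
    rwa [sdeg_induce_compl_singleton ha, sdeg_induce_compl_singleton ha] at hdeg

theorem strongDominationNumber_eq_induce_compl_singleton_add_one [Finite V]
    (ha : G.IsIsolated a) :
    strongDominationNumber G = strongDominationNumber (G.induce {a}ᶜ) + 1 := by
  apply le_antisymm
  · obtain ⟨D, hD, hcard⟩ := exists_isStrongDominatingSet_ncard_eq (G.induce {a}ᶜ)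
    have hD' : IsStrongDominatingSet G (insert a (Subtype.val '' D)) := by
      have hpre : Subtype.val ⁻¹' insert a (Subtype.val '' D) = D := by
        ext x
        simp [Set.mem_compl_singleton_iff.mp x.2]
      rw [isStrongDominatingSet_iff_of_isIsolated ha, hpre]
      exact ⟨Set.mem_insert a _, hD⟩
    calc strongDominationNumber G ≤ (insert a (Subtype.val '' D)).ncard :=
          strongDominationNumber_le hD'
      _ ≤ (Subtype.val '' D).ncard + 1 := Set.ncard_insert_le _ _
      _ = _ := by rw [Set.ncard_image_of_injective D Subtype.val_injective, hcard]
  · obtain ⟨D, hD, hcard⟩ := exists_isStrongDominatingSet_ncard_eq G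
    obtain ⟨haD, hD'⟩ := (isStrongDominatingSet_iff_of_isIsolated ha).mp hD
    have hpre : ((↑) : ({a}ᶜ : Set V) → V) ⁻¹' D = (↑) ⁻¹' (D \ {a}) := by
      ext x
      simp
    calc strongDominationNumber (G.induce {a}ᶜ) + 1 ≤ (Subtype.val ⁻¹' D).ncard + 1 :=
          Nat.add_le_add_right (strongDominationNumber_le hD') 1
      _ = (D \ {a}).ncard + 1 := by
          rw [hpre, Set.ncard_preimage_of_injective_subset_range Subtype.val_injective]
          intro x hx
          exact ⟨⟨x, hx.2⟩, rfl⟩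
      _ = strongDominationNumber G := by rw [Set.ncard_sdiff_singleton_add_one haD, hcard]

end IsolatedVertex

section EndpointDeletion

variable {u v : V}

theorem induce_compl_singleton_deleteEdges :
    (G.deleteEdges {s(u, v)}).induce {u}ᶜ = G.induce {u}ᶜ := by
  ext x y
  simp only [comap_adj, Function.Embedding.subtype_apply, deleteEdges_adj,
    Set.mem_singleton_iff, and_iff_left_iff_imp]
  intro _ hxy
  rcases Sym2.eq_iff.mp hxy with ⟨hx, -⟩ | ⟨-, hy⟩
  · exact x.2 hx
  · exact y.2 hy

theorem isIsolated_deleteEdges_of_forall_adj_eq (h : ∀ w, G.Adj u w → w = v) :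
    (G.deleteEdges {s(u, v)}).IsIsolated u := by
  intro w huw
  rw [deleteEdges_adj] at huw
  exact huw.2 (by rw [h w huw.1]; rfl)

end EndpointDeletion

section PathGraph

variable {n : ℕ}

theorem sdeg_pathGraph_s17 (i : Fin n) :
    sdeg (pathGraph n) i = min i.val 1 + min (n - 1 - i.val) 1 := by
  have hleft : {j : Fin n | j.val + 1 = i.val}.ncard = min i.val 1 := by
    rcases Nat.eq_zero_or_pos i.val with h | h
    · simp [h]
    · rw [Set.ncard_eq_one.mpr ⟨⟨i.val - 1, by omega⟩, by ext j; simp [Fin.ext_iff]; omega⟩]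
      omega
  have hright : {j : Fin n | i.val + 1 = j.val}.ncard = min (n - 1 - i.val) 1 := by
    by_cases h : i.val + 1 < n
    · rw [Set.ncard_eq_one.mpr ⟨⟨i.val + 1, h⟩, by ext j; simp [Fin.ext_iff]; omega⟩]
      omega
    · have hempty : {j : Fin n | i.val + 1 = j.val} = ∅ :=
        Set.eq_empty_of_forall_notMem fun j (hj : i.val + 1 = j.val) => by omega
      rw [hempty, Set.ncard_empty]
      omega
  rw [sdeg, ← hleft, ← hright, ← Set.ncard_union_eq]
  · congr 1
    ext j
    simp only [mem_neighborSet, pathGraph_adj, Set.mem_union, Set.mem_ofPred_eq]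
    exact or_comm
  · rw [Set.disjoint_left]
    intro j (h1 : j.val + 1 = i.val) (h2 : i.val + 1 = j.val)
    omega

theorem strongDominationNumber_pathGraph_le (m : ℕ) :
    strongDominationNumber (pathGraph m) ≤ (m + 2) / 3 := by
  -- For `m ≤ 2` the truncated `m - 2` makes every dominator vertex `0`.
  let block : Fin ((m + 2) / 3) → Fin m := fun q => ⟨min (3 * q + 1) (m - 2), by omega⟩
  have hD : IsStrongDominatingSet (pathGraph m) (Set.range block) := by
    intro x hx
    have hne : block ⟨x / 3, by omega⟩ ≠ x := fun h => hx ⟨_, h⟩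
    simp only [block, ne_eq, Fin.ext_iff] at hne
    refine ⟨block ⟨x / 3, by omega⟩, ⟨_, rfl⟩, ?_, ?_⟩
    · simp only [pathGraph_adj, block]
      omega
    · simp only [sdeg_pathGraph_s17, block]
      omega
  calc strongDominationNumber (pathGraph m) ≤ (Set.range block).ncard :=
        strongDominationNumber_le hD
    _ ≤ (Set.univ : Set (Fin ((m + 2) / 3))).ncard := by
        rw [← Set.image_univ]
        exact Set.ncard_image_le (Set.toFinite _)
    _ = (m + 2) / 3 := by simp

theorem strongDominationNumber_pathGraph_s17 (m : ℕ) :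
    strongDominationNumber (pathGraph m) = (m + 2) / 3 := by
  refine le_antisymm (strongDominationNumber_pathGraph_le m) ?_
  have h := natCard_le_mul_strongDominationNumber (G := pathGraph m) (Δ := 2)
    fun i => by rw [sdeg_pathGraph_s17]; omega
  rw [Nat.card_fin] at h
  omega

def pathGraphIsoInduceComplEndpoint {m : ℕ} (u : Fin (m + 1)) (hu : u = 0 ∨ u = Fin.last m) :
    pathGraph m ≃g (pathGraph (m + 1)).induce {u}ᶜ where
  toEquiv := finSuccAboveEquiv u
  map_rel_iff' {i j} := by
    change (pathGraph (m + 1)).Adj (u.succAbove i) (u.succAbove j) ↔ _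
    rw [pathGraph_adj, pathGraph_adj]
    rcases hu with rfl | rfl
    · simp only [Fin.succAbove_zero, Fin.val_succ]
      omega
    · simp only [Fin.succAbove_last, Fin.val_castSucc]

end PathGraph

theorem strongDominationNumber_path_deleteLeafEdge_general (n : ℕ)
    (hmod : n % 3 ≠ 1) (u v : Fin n) (huv : (SimpleGraph.pathGraph n).Adj u v)
    (hu : sdeg (SimpleGraph.pathGraph n) u = 1)
    (hv : sdeg (SimpleGraph.pathGraph n) v = 2) :
    strongDominationNumber ((SimpleGraph.pathGraph n).deleteEdges {s(u, v)}) =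
      strongDominationNumber (SimpleGraph.pathGraph n) +
        sdeg (SimpleGraph.pathGraph n) u + sdeg (SimpleGraph.pathGraph n) v - 2 ∧
    strongDominationNumber (SimpleGraph.pathGraph n) +
        sdeg (SimpleGraph.pathGraph n) u + sdeg (SimpleGraph.pathGraph n) v - 2 =
      (n + 2) / 3 + 1 := by
  obtain ⟨m, rfl⟩ : ∃ m, n = m + 1 := Nat.exists_eq_add_one.mpr u.pos
  have hend : u = 0 ∨ u = Fin.last m := by
    rw [sdeg_pathGraph_s17] at hu
    simp only [Fin.ext_iff, Fin.val_zero, Fin.val_last]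
    omega
  have hleaf : ∀ w, (pathGraph (m + 1)).Adj u w → w = v := by
    intro w huw
    rw [pathGraph_adj] at huv huw
    rcases hend with rfl | rfl <;> ext <;>
      simp only [Fin.val_zero, Fin.val_last] at huv huw ⊢ <;> omega
  have hdel : strongDominationNumber ((pathGraph (m + 1)).deleteEdges {s(u, v)}) =
      (m + 2) / 3 + 1 := by
    rw [strongDominationNumber_eq_induce_compl_singleton_add_one
        (isIsolated_deleteEdges_of_forall_adj_eq hleaf),
      induce_compl_singleton_deleteEdges,
      ← (pathGraphIsoInduceComplEndpoint u hend).strongDominationNumber_eq,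
      strongDominationNumber_pathGraph_s17]
  rw [hdel, strongDominationNumber_pathGraph_s17, hu, hv]
  omega

/-- For `n ≥ 3` with `n ≢ 1 (mod 3)` and an edge `e = uv` of `P_n`
incident with a leaf (`deg u = 1`, `deg v = 2`),
`γst(P_n - e) = γst(P_n) + deg u + deg v - 2 = ⌈n/3⌉ + 1`. -/
theorem strongDominationNumber_path_deleteLeafEdge (n : ℕ) (hn : 3 ≤ n)
    (hmod : n % 3 ≠ 1) (u v : Fin n) (huv : (SimpleGraph.pathGraph n).Adj u v)
    (hu : sdeg (SimpleGraph.pathGraph n) u = 1)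
    (hv : sdeg (SimpleGraph.pathGraph n) v = 2) :
    strongDominationNumber ((SimpleGraph.pathGraph n).deleteEdges {s(u, v)}) =
      strongDominationNumber (SimpleGraph.pathGraph n) +
        sdeg (SimpleGraph.pathGraph n) u + sdeg (SimpleGraph.pathGraph n) v - 2 ∧
    strongDominationNumber (SimpleGraph.pathGraph n) +
        sdeg (SimpleGraph.pathGraph n) u + sdeg (SimpleGraph.pathGraph n) v - 2 =
      (n + 2) / 3 + 1 :=
  strongDominationNumber_path_deleteLeafEdge_general n hmod u v huv hu hv
end
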